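/- A positive braid word in B_3 is left-divisible (equivalently, right-divisible) by Δ = σ₁σ₂σ₁ in the positive braid monoid B_3⁺ if and only if it is equal in B_3⁺ to a positive word containing the factor σ₁σ₂σ₁ or the factor σ₂σ₁σ₂. -/

import Mathlib

open FreeMonoid in
/-- The defining relation of the positive braid monoid `B₃⁺`. -/
def braidMonRel : FreeMonoid (Fin 2) → FreeMonoid (Fin 2) → Prop := fun x y =>
  x = of 0 * of 1 * of 0 ∧ y = of 1 * of 0 * of 1

/-- The positive braid monoid `B₃⁺ = ⟨σ₁, σ₂ ∣ σ₁σ₂σ₁ = σ₂σ₁σ₂⟩⁺`. -/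
abbrev B3Pos : Type := (conGen braidMonRel).Quotient

/-- The canonical projection from positive braid words to `B₃⁺`. -/
def posMk : FreeMonoid (Fin 2) →* B3Pos := (conGen braidMonRel).mk'

/-- The Garside element `Δ = σ₁σ₂σ₁` of `B₃⁺`. -/
def ΔPos : B3Pos := posMk (FreeMonoid.of 0 * FreeMonoid.of 1 * FreeMonoid.of 0)

/-!
`Δ` is quasi-central in `B₃⁺`: `x Δ = Δ x̄`, where `x̄` exchanges `σ₁` and `σ₂`; on generators
this is `σ₁Δ = σ₁σ₂σ₁σ₂ = Δσ₂` and symmetrically. Since both `σ₁σ₂σ₁` and `σ₂σ₁σ₂` represent `Δ`,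
a word containing either factor is `uΔv = Δūv = uv̄Δ` in `B₃⁺`; conversely `Δu` and `uΔ` contain
the factor `σ₁σ₂σ₁`.
-/

open FreeMonoid

def swapLetters : FreeMonoid (Fin 2) →* FreeMonoid (Fin 2) := FreeMonoid.map Fin.rev

lemma swapLetters_swapLetters (x : FreeMonoid (Fin 2)) : swapLetters (swapLetters x) = x := by
  rw [swapLetters, FreeMonoid.map_map, Fin.rev_involutive.comp_self, FreeMonoid.map_id]
  rfl

lemma posMk_σ₂σ₁σ₂ : posMk (of 1 * of 0 * of 1) = ΔPos :=
  ((Con.eq _).mpr (ConGen.Rel.of _ _ ⟨rfl, rfl⟩)).symm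

lemma posMk_of_mul_ΔPos (a : Fin 2) : posMk (of a) * ΔPos = ΔPos * posMk (of a.rev) := by
  obtain rfl | rfl : a = 0 ∨ a = 1 := by omega
  · calc posMk (of 0) * ΔPos = posMk (of 0 * (of 1 * of 0 * of 1)) := by
          rw [map_mul, posMk_σ₂σ₁σ₂]
      _ = posMk (of 0 * of 1 * of 0 * of 1) := by simp only [mul_assoc]
      _ = ΔPos * posMk (of (Fin.rev 0)) := by rw [map_mul]; rfl
  · calc posMk (of 1) * ΔPos = posMk (of 1 * of 0 * of 1 * of 0) := by
          rw [ΔPos, ← map_mul]; simp only [mul_assoc]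
      _ = ΔPos * posMk (of (Fin.rev 1)) := by rw [map_mul, posMk_σ₂σ₁σ₂]; rfl

lemma posMk_mul_ΔPos (x : FreeMonoid (Fin 2)) :
    posMk x * ΔPos = ΔPos * posMk (swapLetters x) := by
  induction x using FreeMonoid.inductionOn' with
  | one => simp
  | of_mul a x ih =>
    rw [map_mul, mul_assoc, ih, ← mul_assoc, posMk_of_mul_ΔPos, mul_assoc, ← map_mul,
      map_mul swapLetters]
    rfl

lemma ΔPos_mul_posMk (x : FreeMonoid (Fin 2)) :
    ΔPos * posMk x = posMk (swapLetters x) * ΔPos := by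
  rw [posMk_mul_ΔPos, swapLetters_swapLetters]

lemma exists_factor_iff_exists_mul_ΔPos_mul (w : FreeMonoid (Fin 2)) :
    (∃ u v : FreeMonoid (Fin 2),
        posMk w = posMk (u * (of 0 * of 1 * of 0) * v) ∨
        posMk w = posMk (u * (of 1 * of 0 * of 1) * v)) ↔
      ∃ u v : FreeMonoid (Fin 2), posMk w = posMk u * ΔPos * posMk v := by
  have posMk_mul_σ₁σ₂σ₁_mul : ∀ u v : FreeMonoid (Fin 2),
      posMk (u * (of 0 * of 1 * of 0) * v) = posMk u * ΔPos * posMk v := fun u v => by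
    rw [map_mul, map_mul, ΔPos]
  have posMk_mul_σ₂σ₁σ₂_mul : ∀ u v : FreeMonoid (Fin 2),
      posMk (u * (of 1 * of 0 * of 1) * v) = posMk u * ΔPos * posMk v := fun u v => by
    rw [map_mul, map_mul, posMk_σ₂σ₁σ₂]
  simp only [posMk_mul_σ₁σ₂σ₁_mul, posMk_mul_σ₂σ₁σ₂_mul, or_self]

lemma exists_ΔPos_mul_iff (w : FreeMonoid (Fin 2)) :
    (∃ u, posMk w = ΔPos * posMk u) ↔ ∃ u v, posMk w = posMk u * ΔPos * posMk v := by
  refine ⟨fun ⟨v, hv⟩ => ⟨1, v, by rw [hv, map_one, one_mul]⟩,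
    fun ⟨u, v, h⟩ => ⟨swapLetters u * v, ?_⟩⟩
  rw [h, posMk_mul_ΔPos, mul_assoc, map_mul]

lemma exists_mul_ΔPos_iff (w : FreeMonoid (Fin 2)) :
    (∃ u, posMk w = posMk u * ΔPos) ↔ ∃ u v, posMk w = posMk u * ΔPos * posMk v := by
  refine ⟨fun ⟨u, hu⟩ => ⟨u, 1, by rw [hu, map_one, mul_one]⟩,
    fun ⟨u, v, h⟩ => ⟨u * swapLetters v, ?_⟩⟩
  rw [h, mul_assoc, ΔPos_mul_posMk, map_mul, mul_assoc]

open FreeMonoid in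
/-- A positive braid word is left-divisible (equivalently, right-divisible) by
`Δ = σ₁σ₂σ₁` in `B₃⁺` iff it is equal in `B₃⁺` to a positive word containing the
factor `σ₁σ₂σ₁` or the factor `σ₂σ₁σ₂`. -/
theorem delta_divides_iff_factor (w : FreeMonoid (Fin 2)) :
    ((∃ u : FreeMonoid (Fin 2), posMk w = ΔPos * posMk u) ↔
      (∃ u v : FreeMonoid (Fin 2),
        posMk w = posMk (u * (of 0 * of 1 * of 0) * v) ∨
        posMk w = posMk (u * (of 1 * of 0 * of 1) * v))) ∧
    ((∃ u : FreeMonoid (Fin 2), posMk w = posMk u * ΔPos) ↔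
      (∃ u v : FreeMonoid (Fin 2),
        posMk w = posMk (u * (of 0 * of 1 * of 0) * v) ∨
        posMk w = posMk (u * (of 1 * of 0 * of 1) * v))) := by
  rw [exists_factor_iff_exists_mul_ΔPos_mul]
  exact ⟨exists_ΔPos_mul_iff w, exists_mul_ΔPos_iff w⟩
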